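/- For every n ≥ 2, the dcpo (Δⁿ, ⊑) is exact: for every x ∈ Δⁿ, the set ⇓x := {y ∈ Δⁿ : y ≪ x} is directed and has supremum x. -/

import Mathlib

/-- Δⁿ : classical n-states. -/
def IsClassicalState (n : ℕ) (x : Fin n → ℝ) : Prop :=
  (∀ i, 0 ≤ x i) ∧ ∑ i, x i = 1

def ClState (n : ℕ) := {x : Fin n → ℝ // IsClassicalState n x}

/-- The Bayesian order (symmetric characterization). -/
def bayesLE {n : ℕ} (x y : Fin n → ℝ) : Prop :=
  ∃ σ : Equiv.Perm (Fin n),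
    Antitone (fun i => x (σ i)) ∧ Antitone (fun i => y (σ i)) ∧
    ∀ i j : Fin n, (i : ℕ) + 1 = (j : ℕ) →
      x (σ i) * y (σ j) ≤ x (σ j) * y (σ i)

def clLE {n : ℕ} (x y : ClState n) : Prop := bayesLE x.val y.val

/-- `a` is the supremum (least upper bound) of `S` with respect to `le`. -/
def IsLub' {α : Type*} (le : α → α → Prop) (S : Set α) (a : α) : Prop :=
  (∀ s ∈ S, le s a) ∧ ∀ b, (∀ s ∈ S, le s b) → le a b

/-- `x ≪ y` : for every (nonempty) directed `S` with supremum `y`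
there is `s ∈ S` with `x ⊑ s`. -/
def WayBelow {α : Type*} (le : α → α → Prop) (x y : α) : Prop :=
  ∀ S : Set α, S.Nonempty → DirectedOn le S → IsLub' le S y → ∃ s ∈ S, le x s

/-!
For `0 ≤ t < 1` the states `x_t = (1 - t) • uniform + t • x` form a chain with supremum `x`, and
each of them is way below `x`. Indeed, `Δⁿ` is compact and `⊑` has closed graph, so the supremum
of a directed set lies in its closure; and the cross inequalities expressing `x_t ⊑ z` are strict
at `z = x` wherever they are not trivially true, so they hold on a neighbourhood of `x`. In any
preorder, a directed set of elements way below `x` with supremum `x` forces `⇓x` to be directed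
with supremum `x`.

The order is handled through its permutation-free form: `x ⊑ y` iff `y b < y a → x b ≤ x a` and
`y b ≤ y a → x a * y b ≤ x b * y a` for all `a, b`; transitivity and antisymmetry on states
follow from it by short case analyses.
-/

open Set Filter Topology

section BayesOrder

variable {n : ℕ} {x y z : Fin n → ℝ}

theorem cross_le_of_adjacent {A B : Fin n → ℝ} (hA : ∀ i, 0 ≤ A i) (hB : ∀ i, 0 ≤ B i)
    (hB_anti : Antitone B) (hadj : ∀ i j : Fin n, (i : ℕ) + 1 = j → A i * B j ≤ A j * B i)
    {p q : Fin n} (hpq : p ≤ q) : A p * B q ≤ A q * B p := by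
  suffices ∀ k, (p : ℕ) ≤ k → ∀ hk : k < n, A p * B ⟨k, hk⟩ ≤ A ⟨k, hk⟩ * B p from
    this q hpq q.2
  refine Nat.le_induction (fun _ => le_rfl) fun k _ ih hk => ?_
  set m : Fin n := ⟨k, by omega⟩
  set q : Fin n := ⟨k + 1, hk⟩
  have h₁ : A p * B m ≤ A m * B p := ih (by omega)
  have h₂ : A m * B q ≤ A q * B m := hadj m q rfl
  rcases (hB q).eq_or_lt with hBq | hBq
  · rw [← hBq, mul_zero]
    exact mul_nonneg (hA q) (hB p)
  · have hBm : 0 < B m := hBq.trans_le (hB_anti (Fin.mk_le_mk.2 k.le_succ))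
    refine le_of_mul_le_mul_right ?_ hBm
    calc A p * B q * B m = A p * B m * B q := by ring
      _ ≤ A m * B p * B q := mul_le_mul_of_nonneg_right h₁ (hB q)
      _ = A m * B q * B p := by ring
      _ ≤ A q * B m * B p := mul_le_mul_of_nonneg_right h₂ (hB p)
      _ = A q * B p * B m := by ring

theorem bayesLE_of_le_of_cross_le (hle : ∀ a b, y b < y a → x b ≤ x a)
    (hcross : ∀ a b, y b ≤ y a → x a * y b ≤ x b * y a) : bayesLE x y := by
  set σ := Tuple.sort fun a => toLex (-y a, -x a)
  have hσ : ∀ {p q : Fin n}, p ≤ q →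
      y (σ q) < y (σ p) ∨ y (σ q) = y (σ p) ∧ x (σ q) ≤ x (σ p) := fun hpq => by
    have := Prod.Lex.toLex_le_toLex.1 (Tuple.monotone_sort (fun a => toLex (-y a, -x a)) hpq)
    simp only [neg_lt_neg_iff, neg_inj, neg_le_neg_iff] at this
    exact this.imp id fun h => ⟨h.1.symm, h.2⟩
  refine ⟨σ, fun p q hpq => ?_, fun p q hpq => ?_, fun i j hij => hcross _ _ ?_⟩
  · rcases hσ hpq with h | h
    exacts [hle _ _ h, h.2]
  · rcases hσ hpq with h | h
    exacts [h.le, h.1.le]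
  · rcases hσ (Fin.le_def.2 (by omega : (i : ℕ) ≤ j)) with h | h
    exacts [h.le, h.1.le]

theorem bayesLE.le_of_lt (h : bayesLE x y) {a b : Fin n} (hab : y b < y a) : x b ≤ x a := by
  obtain ⟨σ, hxσ, hyσ, -⟩ := h
  obtain ⟨p, rfl⟩ := σ.surjective a
  obtain ⟨q, rfl⟩ := σ.surjective b
  rcases le_total p q with hpq | hqp
  · exact hxσ hpq
  · exact absurd (hyσ hqp) hab.not_ge

theorem bayesLE.cross_le (h : bayesLE x y) (hx : ∀ i, 0 ≤ x i) (hy : ∀ i, 0 ≤ y i)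
    {a b : Fin n} (hab : y b ≤ y a) : x a * y b ≤ x b * y a := by
  obtain ⟨σ, hxσ, hyσ, hadj⟩ := h
  obtain ⟨p, rfl⟩ := σ.surjective a
  obtain ⟨q, rfl⟩ := σ.surjective b
  rcases le_total p q with hpq | hqp
  · exact cross_le_of_adjacent (A := fun i => x (σ i)) (fun _ => hx _) (fun _ => hy _) hyσ hadj
      hpq
  · rw [le_antisymm hab (hyσ hqp)]
    exact mul_le_mul_of_nonneg_right (hxσ hqp) (hy _)

theorem bayesLE_refl (x : Fin n → ℝ) : bayesLE x x :=
  bayesLE_of_le_of_cross_le (fun _ _ => le_of_lt) fun _ _ _ => (mul_comm _ _).le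

theorem bayesLE.eq_zero_of_eq_zero (h : bayesLE y z) (hy : IsClassicalState n y)
    (hz : ∀ i, 0 ≤ z i) {a : Fin n} (ha : y a = 0) : z a = 0 := by
  obtain ⟨c, -, hc⟩ : ∃ c ∈ Finset.univ, (0 : Fin n → ℝ) c < y c :=
    Finset.exists_lt_of_sum_lt (by simp [hy.2])
  rcases lt_or_ge (z c) (z a) with hlt | hle
  · exact absurd (h.le_of_lt hlt) (by simpa [ha] using hc)
  · have := h.cross_le hy.1 hz hle
    rw [ha, zero_mul] at this
    exact le_antisymm (nonpos_of_mul_nonpos_right (by linarith) hc) (hz a)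

theorem bayesLE_trans (hx : ∀ i, 0 ≤ x i) (hy : IsClassicalState n y) (hz : ∀ i, 0 ≤ z i)
    (hxy : bayesLE x y) (hyz : bayesLE y z) : bayesLE x z := by
  have zero : ∀ {a}, y a = 0 → z a = 0 := hyz.eq_zero_of_eq_zero hy hz
  refine bayesLE_of_le_of_cross_le (fun a b hab => ?_) fun a b hab => ?_
  · rcases (hyz.le_of_lt hab).lt_or_eq with hy' | hy'
    · exact hxy.le_of_lt hy'
    rcases (hy.1 a).lt_or_eq with ha | ha
    · have := hxy.cross_le hx hy.1 hy'.ge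
      rw [hy'] at this
      exact le_of_mul_le_mul_right this ha
    · rw [zero ha.symm, zero (hy'.trans ha.symm)] at hab
      exact absurd hab (lt_irrefl 0)
  · rcases lt_or_ge (y a) (y b) with hy' | hy'
    -- `y ⊑ z` leaves room for `y a < y b` only when `z a = z b = 0`.
    · have hz' : z a = z b := le_antisymm (not_lt.1 fun h => hy'.not_ge (hyz.le_of_lt h)) hab
      have := hyz.cross_le hy.1 hz hz'.le
      rcases (hz a).lt_or_eq with hza | hza
      · rw [hz'] at this hza
        exact absurd (le_of_mul_le_mul_right this hza) hy'.not_ge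
      · rw [← hza, ← hz', ← hza, mul_zero, mul_zero]
    rcases (hy.1 b).lt_or_eq with hb | hb
    · refine le_of_mul_le_mul_right ?_ (mul_pos (hb.trans_le hy') hb)
      calc x a * z b * (y a * y b) = x a * y b * (y a * z b) := by ring
        _ ≤ x b * y a * (y a * z b) :=
          mul_le_mul_of_nonneg_right (hxy.cross_le hx hy.1 hy') (mul_nonneg (hy.1 a) (hz b))
        _ ≤ x b * y a * (y b * z a) :=
          mul_le_mul_of_nonneg_left (hyz.cross_le hy.1 hz hab) (mul_nonneg (hx b) (hy.1 a))
        _ = x b * z a * (y a * y b) := by ring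
    · rw [zero hb.symm, mul_zero]
      exact mul_nonneg (hx b) (hz a)

theorem bayesLE_antisymm (hx : IsClassicalState n x) (hy : IsClassicalState n y)
    (hxy : bayesLE x y) (hyx : bayesLE y x) : x = y := by
  have cross_eq_of_le : ∀ a b, y b ≤ y a → x a * y b = x b * y a := fun a b hab => by
    refine le_antisymm (hxy.cross_le hx.1 hy.1 hab) ?_
    rcases hab.lt_or_eq with hlt | heq
    · linarith [hyx.cross_le hy.1 hx.1 (hxy.le_of_lt hlt)]
    · exact hxy.cross_le hx.1 hy.1 heq.ge
  have cross_eq : ∀ a b, x a * y b = x b * y a := fun a b =>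
    (le_total (y b) (y a)).elim (cross_eq_of_le a b) fun h => by linarith [cross_eq_of_le b a h]
  funext a
  calc x a = x a * ∑ b, y b := by rw [hy.2, mul_one]
    _ = (∑ b, x b) * y a := by simp only [Finset.mul_sum, Finset.sum_mul, cross_eq a]
    _ = y a := by rw [hx.2, one_mul]

end BayesOrder

theorem isClosed_setOf_bayesLE {n : ℕ} :
    IsClosed {p : (Fin n → ℝ) × (Fin n → ℝ) | bayesLE p.1 p.2} := by
  simp only [bayesLE, Antitone, ofPred_exists, ofPred_and, ofPred_forall]
  refine isClosed_iUnion_of_finite fun σ => .inter ?_ (.inter ?_ ?_) <;>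
    exact isClosed_iInter fun i => isClosed_iInter fun j => isClosed_iInter fun _ =>
      isClosed_le (by fun_prop) (by fun_prop)

section WayBelow

variable {α : Type*}

theorem isLub'_iff_isLUB [Preorder α] {S : Set α} {a : α} :
    IsLub' (· ≤ ·) S a ↔ IsLUB S a :=
  Iff.rfl

theorem WayBelow.le [Preorder α] {x y : α} (h : WayBelow (· ≤ ·) x y) : x ≤ y := by
  obtain ⟨s, rfl, hs⟩ := h {y} (singleton_nonempty y) (directedOn_singleton y)
    (isLub'_iff_isLUB.2 isLUB_singleton)
  exact hs

theorem directedOn_wayBelow_of_subset [Preorder α] {C : Set α} {x : α}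
    (hdir : DirectedOn (· ≤ ·) C) (hne : C.Nonempty) (hlub : IsLUB C x)
    (hC : C ⊆ {y | WayBelow (· ≤ ·) y x}) :
    DirectedOn (· ≤ ·) {y | WayBelow (· ≤ ·) y x} := by
  intro y₁ hy₁ y₂ hy₂
  obtain ⟨c₁, hc₁, hyc₁⟩ := hy₁ C hne hdir hlub
  obtain ⟨c₂, hc₂, hyc₂⟩ := hy₂ C hne hdir hlub
  obtain ⟨c, hc, hc₁c, hc₂c⟩ := hdir c₁ hc₁ c₂ hc₂
  exact ⟨c, hC hc, hyc₁.trans hc₁c, hyc₂.trans hc₂c⟩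

theorem isLUB_wayBelow_of_subset [Preorder α] {C : Set α} {x : α} (hlub : IsLUB C x)
    (hC : C ⊆ {y | WayBelow (· ≤ ·) y x}) : IsLUB {y | WayBelow (· ≤ ·) y x} x :=
  hlub.of_subset_of_superset isLUB_Iic hC fun _ hy => WayBelow.le hy

variable [PartialOrder α] [TopologicalSpace α] [CompactSpace α] [OrderClosedTopology α]

theorem IsLUB.mem_closure_of_directedOn {S : Set α} {x : α} (hlub : IsLUB S x)
    (hne : S.Nonempty) (hdir : DirectedOn (· ≤ ·) S) : x ∈ closure S := by
  have := hne.to_subtype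
  obtain ⟨b, hb⟩ := IsCompact.nonempty_iInter_of_directed_nonempty_isCompact_isClosed
    (fun s : S => closure S ∩ Ici (s : α))
    (fun s₁ s₂ => by
      obtain ⟨s, hs, h₁, h₂⟩ := hdir s₁ s₁.2 s₂ s₂.2
      exact ⟨⟨s, hs⟩, inter_subset_inter_right _ (Ici_subset_Ici.2 h₁),
        inter_subset_inter_right _ (Ici_subset_Ici.2 h₂)⟩)
    (fun s => ⟨s, subset_closure s.2, le_rfl⟩)
    (fun _ => isClosed_closure.inter isClosed_Ici |>.isCompact)
    (fun _ => isClosed_closure.inter isClosed_Ici)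
  rw [mem_iInter] at hb
  have hbS : b ∈ closure S := (hb ⟨_, hne.some_mem⟩).1
  have hbx : b ≤ x := closure_minimal hlub.1 isClosed_Iic hbS
  have hxb : x ≤ b := hlub.2 fun s hs => (hb ⟨s, hs⟩).2
  exact le_antisymm hxb hbx ▸ hbS

theorem wayBelow_of_eventually_le {x y : α} (h : ∀ᶠ s in 𝓝 x, y ≤ s) :
    WayBelow (· ≤ ·) y x := fun _ hne hdir hlub =>
  ((mem_closure_iff_frequently.1
    ((isLub'_iff_isLUB.1 hlub).mem_closure_of_directedOn hne hdir)).and_eventually h).exists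

end WayBelow

section MixUniform

variable {n : ℕ} {x : Fin n → ℝ} {s t : ℝ}

noncomputable def mixUniform (x : Fin n → ℝ) (t : ℝ) : Fin n → ℝ :=
  fun i => (1 - t) / n + t * x i

theorem IsClassicalState.ne_zero (hx : IsClassicalState n x) : n ≠ 0 := by
  rintro rfl
  simpa using hx.2

theorem mixUniform_one (x : Fin n → ℝ) : mixUniform x 1 = x := by
  funext i
  simp [mixUniform]

theorem mixUniform_nonneg (hx : ∀ i, 0 ≤ x i) (h0 : 0 ≤ t) (h1 : t ≤ 1) (i : Fin n) :
    0 ≤ mixUniform x t i :=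
  add_nonneg (div_nonneg (sub_nonneg.2 h1) n.cast_nonneg) (mul_nonneg h0 (hx i))

theorem isClassicalState_mixUniform (hx : IsClassicalState n x) (h0 : 0 ≤ t) (h1 : t ≤ 1) :
    IsClassicalState n (mixUniform x t) := by
  refine ⟨mixUniform_nonneg hx.1 h0 h1, ?_⟩
  have : (n : ℝ) ≠ 0 := Nat.cast_ne_zero.2 hx.ne_zero
  simp only [mixUniform, Finset.sum_add_distrib, ← Finset.mul_sum, hx.2, Finset.sum_const,
    Finset.card_univ, Fintype.card_fin, nsmul_eq_mul]
  field_simp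
  ring

theorem continuous_mixUniform (x : Fin n → ℝ) : Continuous (mixUniform x) :=
  continuous_pi fun i => by unfold mixUniform; fun_prop

theorem bayesLE_mixUniform_mono (hs : 0 ≤ s) (hst : s ≤ t) :
    bayesLE (mixUniform x s) (mixUniform x t) := by
  refine bayesLE_of_le_of_cross_le (fun a b hab => ?_) fun a b hab => ?_
  · have : x b < x a := by
      by_contra! h
      exact hab.not_ge (by simp only [mixUniform]; gcongr; linarith)
    simp only [mixUniform]
    gcongr
  · have hn : (n : ℝ) ≠ 0 := Nat.cast_ne_zero.2 (Fin.pos a).ne'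
    have key : mixUniform x s a * mixUniform x t b - mixUniform x s b * mixUniform x t a
        = (x a - x b) * (s - t) / n := by
      simp only [mixUniform]
      field_simp
      ring
    suffices (x a - x b) * (s - t) ≤ 0 by
      have := div_nonpos_of_nonpos_of_nonneg this n.cast_nonneg
      linarith
    rcases (hs.trans hst).eq_or_lt with ht | ht
    · simp [← ht, le_antisymm hst (ht ▸ hs)]
    · have : x b ≤ x a := le_of_mul_le_mul_left (by simpa [mixUniform] using hab) ht
      exact mul_nonpos_of_nonneg_of_nonpos (sub_nonneg.2 this) (sub_nonpos.2 hst)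

theorem eventually_bayesLE_mixUniform (hx : ∀ i, 0 ≤ x i) (h0 : 0 ≤ t) (h1 : t < 1) :
    ∀ᶠ z in 𝓝 x, bayesLE (mixUniform x t) z := by
  set m := mixUniform x t
  have hgap : ∀ a b, x b < x a → ∀ᶠ z in 𝓝 x, z b < z a ∧ m a * z b < m b * z a := by
    intro a b hab
    have hn : (0 : ℝ) < n := Nat.cast_pos.2 (Fin.pos a)
    have hm : m a * x b < m b * x a := by
      have := mul_neg_of_pos_of_neg (div_pos (sub_pos.2 h1) hn) (sub_neg.2 hab)
      simp only [m, mixUniform]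
      linarith
    exact ((continuous_apply b).continuousAt.eventually_lt (continuous_apply a).continuousAt
      hab).and ((continuous_const.mul (continuous_apply b)).continuousAt.eventually_lt
        (continuous_const.mul (continuous_apply a)).continuousAt hm)
  have : ∀ᶠ z in 𝓝 x, ∀ a b, x b < x a → z b < z a ∧ m a * z b < m b * z a := by
    simpa only [eventually_all, eventually_imp_distrib_left] using hgap
  filter_upwards [this] with z hz
  refine bayesLE_of_le_of_cross_le (fun a b hab => ?_) fun a b hab => ?_
  · have : x b ≤ x a := not_lt.1 fun h => (hz b a h).1.asymm hab
    simp only [m, mixUniform]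
    gcongr
  · rcases lt_trichotomy (x b) (x a) with h | h | h
    · exact (hz a b h).2.le
    · have : m a = m b := by simp only [m, mixUniform, h]
      rw [this]
      exact mul_le_mul_of_nonneg_left hab (mixUniform_nonneg hx h0 h1.le b)
    · exact absurd hab (hz b a h).1.not_ge

end MixUniform

namespace ClState

variable {n : ℕ}

instance : PartialOrder (ClState n) where
  le := clLE
  le_refl x := bayesLE_refl x.val
  le_trans x y z := bayesLE_trans x.2.1 y.2 z.2.1
  le_antisymm x y hxy hyx := Subtype.ext (bayesLE_antisymm x.2 y.2 hxy hyx)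

instance : TopologicalSpace (ClState n) := instTopologicalSpaceSubtype

-- `ClState n` is `stdSimplex ℝ (Fin n)` by definition.
instance : CompactSpace (ClState n) := stdSimplex.instCompactSpace_coe ℝ (Fin n)

instance : OrderClosedTopology (ClState n) :=
  ⟨isClosed_setOf_bayesLE.preimage (continuous_subtype_val.prodMap continuous_subtype_val)⟩

/-- The parameter is clamped to `[0, 1]`, so the path is defined on all of `ℝ`. -/
noncomputable def uniformPath (x : ClState n) (t : ℝ) : ClState n :=
  let c := projIcc 0 1 zero_le_one t
  ⟨mixUniform x.val c, isClassicalState_mixUniform x.2 c.2.1 c.2.2⟩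

variable (x : ClState n)

theorem uniformPath_one : uniformPath x 1 = x :=
  Subtype.ext <| by simp [uniformPath, mixUniform_one]

theorem monotone_uniformPath : Monotone (uniformPath x) := fun _ _ hst =>
  bayesLE_mixUniform_mono (projIcc 0 1 zero_le_one _).2.1 (monotone_projIcc zero_le_one hst)

theorem continuous_uniformPath : Continuous (uniformPath x) :=
  ((continuous_mixUniform x.val).comp (continuous_subtype_val.comp continuous_projIcc)).subtype_mk _

theorem uniformPath_wayBelow {t : ℝ} (ht : t < 1) : WayBelow (· ≤ ·) (uniformPath x t) x := by
  refine wayBelow_of_eventually_le <| (continuous_subtype_val.tendsto x).eventually <|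
    eventually_bayesLE_mixUniform x.2.1 (projIcc 0 1 zero_le_one t).2.1 ?_
  simp [coe_projIcc, ht]

theorem isLUB_uniformPath_image_Iio : IsLUB (uniformPath x '' Iio 1) x := by
  have hx := (continuous_uniformPath x).continuousWithinAt.mem_closure_image
    (by simp : (1 : ℝ) ∈ closure (Iio 1))
  rw [uniformPath_one] at hx
  refine ⟨?_, fun b hb => closure_minimal hb isClosed_Iic hx⟩
  rintro _ ⟨t, ht, rfl⟩
  simpa only [uniformPath_one] using monotone_uniformPath x ht.le

end ClState

theorem classical_states_exact_general (n : ℕ) (x : ClState n) :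
    {y : ClState n | WayBelow clLE y x}.Nonempty ∧
    DirectedOn clLE {y : ClState n | WayBelow clLE y x} ∧
    IsLub' clLE {y : ClState n | WayBelow clLE y x} x := by
  set C := x.uniformPath '' Iio 1
  have hC : C ⊆ {y | WayBelow (· ≤ ·) y x} := by
    rintro _ ⟨t, ht, rfl⟩
    exact x.uniformPath_wayBelow ht
  have hne : C.Nonempty := ⟨_, 0, mem_Iio.2 zero_lt_one, rfl⟩
  have hdir : DirectedOn (· ≤ ·) C :=
    (x.monotone_uniformPath.isChain_image (isChain_of_trichotomous _)).directedOn
  have hlub : IsLUB C x := x.isLUB_uniformPath_image_Iio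
  exact ⟨hne.mono hC, directedOn_wayBelow_of_subset hdir hne hlub hC,
    isLUB_wayBelow_of_subset hlub hC⟩

/-- (Δⁿ, ⊑) is exact: for every x, ⇓x is directed with supremum x. -/
theorem classical_states_exact (n : ℕ) (hn : 2 ≤ n) (x : ClState n) :
    {y : ClState n | WayBelow clLE y x}.Nonempty ∧
    DirectedOn clLE {y : ClState n | WayBelow clLE y x} ∧
    IsLub' clLE {y : ClState n | WayBelow clLE y x} x :=
  classical_states_exact_general n x
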